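/- For every a > 0, d ≥ 1, k ≥ 1 integer, and x, z ∈ (−d, d): ∫_{−∞}^{−d} e^{−a(x−y)}(x−y)^{−1/2} · e^{−a(2kd+z−y)}(2kd+z−y)^{−1/2} dy ≤ √π e^{−a(2(k+1)d + x + z)} / √(4ad). -/

import Mathlib

/-!
For `y < -d` we have `x - y ≥ -d - y > 0` and `2kd + z - y ≥ 2d`, while the two exponents add up
to `-a(2(k+1)d + x + z) - 2a(-d - y)`. Hence the integrand is at most
`e^{-a(2(k+1)d + x + z)} / √(2d)` times the kernel `e^{-2at} / √t` at `t = -d - y`, and that kernel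
integrates over `(0, ∞)` to `Γ(1/2) / √(2a) = √(π / (2a))`.
-/

open Real MeasureTheory Set

theorem integrableOn_Iio_comp_sub_left_iff {E : Type*} [NormedAddCommGroup E] (f : ℝ → E) (c : ℝ) :
    IntegrableOn (fun y => f (c - y)) (Iio c) ↔ IntegrableOn f (Ioi 0) := by
  simpa [preimage_const_sub_Ioi, Function.comp_def] using
    (volume.measurePreserving_sub_left c).integrableOn_comp_preimage
      (MeasurableEquiv.subLeft c).measurableEmbedding (f := f) (s := Ioi 0)

theorem setIntegral_Iio_comp_sub_left {E : Type*} [NormedAddCommGroup E] [NormedSpace ℝ E]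
    (f : ℝ → E) (c : ℝ) : ∫ y in Iio c, f (c - y) = ∫ t in Ioi 0, f t := by
  simpa [preimage_const_sub_Ioi] using
    (volume.measurePreserving_sub_left c).setIntegral_preimage_emb
      (MeasurableEquiv.subLeft c).measurableEmbedding f (Ioi 0)

theorem exp_neg_mul_div_sqrt_eqOn_Ioi (b : ℝ) :
    EqOn (fun t => exp (-b * t) / √t) (fun t => t ^ ((1 / 2 : ℝ) - 1) * exp (-(b * t))) (Ioi 0) := by
  intro t ht
  dsimp only
  rw [sqrt_eq_rpow, div_eq_mul_inv, ← rpow_neg (le_of_lt ht), mul_comm, neg_mul]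
  norm_num

theorem integrableOn_exp_neg_mul_div_sqrt {b : ℝ} (hb : 0 < b) :
    IntegrableOn (fun t => exp (-b * t) / √t) (Ioi 0) := by
  refine IntegrableOn.congr_fun ?_ (exp_neg_mul_div_sqrt_eqOn_Ioi b).symm measurableSet_Ioi
  simpa [rpow_one] using
    integrableOn_rpow_mul_exp_neg_mul_rpow (s := (1 / 2 : ℝ) - 1) (p := 1) (by norm_num) one_pos hb

theorem integral_exp_neg_mul_div_sqrt {b : ℝ} (hb : 0 < b) :
    ∫ t in Ioi 0, exp (-b * t) / √t = √(π / b) := by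
  rw [setIntegral_congr_fun measurableSet_Ioi (exp_neg_mul_div_sqrt_eqOn_Ioi b),
    integral_rpow_mul_exp_neg_mul_Ioi one_half_pos hb, Gamma_one_half_eq, ← sqrt_eq_rpow,
    ← sqrt_mul (by positivity), one_div_mul_eq_div]

theorem exp_div_sqrt_mul_exp_div_sqrt_le (a : ℝ) {u v p q : ℝ} (hp : 0 < p) (hq : 0 < q)
    (hpu : p ≤ u) (hqv : q ≤ v) :
    exp (-a * u) / √u * (exp (-a * v) / √v) ≤ exp (-a * (u + v)) / (√p * √q) := by
  rw [div_mul_div_comm, ← exp_add, ← mul_add]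
  gcongr

theorem stmt13_general (a d : ℝ) (k : ℕ) (ha : 0 < a) (hk : 1 ≤ k)
    (x z : ℝ) (hx : x ∈ Set.Ioo (-d) d) (hz : z ∈ Set.Ioo (-d) d) :
    ∫ y in Set.Iic (-d),
        Real.exp (-a * (x - y)) / Real.sqrt (x - y) *
          (Real.exp (-a * (2 * (k : ℝ) * d + z - y)) /
            Real.sqrt (2 * (k : ℝ) * d + z - y)) ≤
      Real.sqrt π * Real.exp (-a * (2 * ((k : ℝ) + 1) * d + x + z)) /
        Real.sqrt (4 * a * d) := by
  have hd : 0 < d := by linarith [hx.1, hx.2]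
  have hk' : (1 : ℝ) ≤ k := by exact_mod_cast hk
  set A := exp (-a * (2 * ((k : ℝ) + 1) * d + x + z)) / √(2 * d)
  have hbound : ∀ y ∈ Iio (-d),
      exp (-a * (x - y)) / √(x - y) * (exp (-a * (2 * k * d + z - y)) / √(2 * k * d + z - y)) ≤
        A * (exp (-(2 * a) * (-d - y)) / √(-d - y)) := by
    intro y (hy : y < -d)
    calc _ ≤ exp (-a * ((x - y) + (2 * k * d + z - y))) / (√(-d - y) * √(2 * d)) :=
          exp_div_sqrt_mul_exp_div_sqrt_le a (by linarith) (by linarith) (by linarith [hx.1])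
            (by nlinarith [hz.1])
      _ = A * (exp (-(2 * a) * (-d - y)) / √(-d - y)) := by
          rw [show -a * ((x - y) + (2 * k * d + z - y)) =
            -a * (2 * ((k : ℝ) + 1) * d + x + z) + -(2 * a) * (-d - y) by ring, exp_add]
          ring
  calc _ = ∫ y in Iio (-d),
        exp (-a * (x - y)) / √(x - y) * (exp (-a * (2 * k * d + z - y)) / √(2 * k * d + z - y)) :=
        integral_Iic_eq_integral_Iio
    _ ≤ ∫ y in Iio (-d), A * (exp (-(2 * a) * (-d - y)) / √(-d - y)) := by
        refine integral_mono_of_nonneg (.of_forall fun y => by positivity) ?_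
          ((ae_restrict_iff' measurableSet_Iio).mpr (.of_forall hbound))
        exact ((integrableOn_Iio_comp_sub_left_iff _ _).mpr
          (integrableOn_exp_neg_mul_div_sqrt (by positivity))).const_mul A
    _ = A * √(π / (2 * a)) := by
        rw [integral_const_mul, setIntegral_Iio_comp_sub_left (fun t => exp (-(2 * a) * t) / √t),
          integral_exp_neg_mul_div_sqrt (by positivity)]
    _ = _ := by
        rw [sqrt_div' _ (by positivity), show 4 * a * d = (2 * d) * (2 * a) by ring,
          sqrt_mul (by positivity : 0 ≤ 2 * d)]
        simp only [A]
        field_simp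

/-- tail convolution estimate I_{k,1}. -/
theorem stmt13 (a d : ℝ) (k : ℕ) (ha : 0 < a) (hd : 1 ≤ d) (hk : 1 ≤ k)
    (x z : ℝ) (hx : x ∈ Set.Ioo (-d) d) (hz : z ∈ Set.Ioo (-d) d) :
    ∫ y in Set.Iic (-d),
        Real.exp (-a * (x - y)) / Real.sqrt (x - y) *
          (Real.exp (-a * (2 * (k : ℝ) * d + z - y)) /
            Real.sqrt (2 * (k : ℝ) * d + z - y)) ≤
      Real.sqrt π * Real.exp (-a * (2 * ((k : ℝ) + 1) * d + x + z)) /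
        Real.sqrt (4 * a * d) :=
  stmt13_general a d k ha hk x z hx hz
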